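/- Let 1 ≤ q < ∞, 1 ≤ p < ∞, let {u_k} ⊂ L^q(Ω;ℝ^m) and {w_k} ⊂ L^p(Ω;ℝ^{m×n}) be bounded sequences such that {(u_k, w_k)} generates the triple (σ, ν̂, μ̂), and assume additionally that u_k → u strongly in L^q(Ω;ℝ^m). Then for almost every x ∈ Ω, μ̂_{x,s} = δ_{u(x)} (the Dirac measure at u(x)) for ν̂_x-almost every s ∈ ℝ^{m×n}. -/

import Mathlib

open MeasureTheory Filter Topology Metric Set ENNReal NNReal

set_option autoImplicit false
set_option maxHeartbeats 2000000

noncomputable section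

/-- `ℝ^n` -/
abbrev En (n : ℕ) : Type := EuclideanSpace ℝ (Fin n)
/-- `ℝ^m` -/
abbrev Vec (m : ℕ) : Type := EuclideanSpace ℝ (Fin m)
/-- `ℝ^{m×n}` -/
abbrev Mat (m n : ℕ) : Type := EuclideanSpace ℝ (Fin m × Fin n)

def GeneratesTriple {m n : ℕ} (p : ℝ) (Ω : Set (En n))
    {βU βR : Type} [TopologicalSpace βU] [TopologicalSpace βR]
    [MeasurableSpace βU] [MeasurableSpace βR]
    (ιU : Vec m → βU) (ιR : Mat m n → βR)
    (u : ℕ → En n → Vec m) (w : ℕ → En n → Mat m n)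
    (σ : Measure (En n)) (νh : En n → Measure βR) (μh : βR → En n → Measure βU) : Prop :=
  ∀ g : En n → ℝ, Continuous g → ∀ F : C(βU, ℝ), ∀ Ψ : C(βR, ℝ),
    Tendsto (fun k => ∫ x in Ω, g x * F (ιU (u k x)) * Ψ (ιR (w k x)) * (1 + ‖w k x‖ ^ p))
      atTop
      (𝓝 (∫ x in closure Ω, g x * (∫ s, (∫ r, F r ∂(μh s x)) * Ψ s ∂(νh x)) ∂σ))

lemma aux_le_of_forall_pos_le_add {a b : ℝ} (h : ∀ ε : ℝ, 0 < ε → a ≤ b + ε) : a ≤ b := by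
  by_contra hab
  push_neg at hab
  have := h ((a - b)/2) (by linarith)
  linarith

lemma aux_integrable_of_bounded {α : Type*} [MeasurableSpace α] {μ' : Measure α}
    [IsFiniteMeasure μ'] {f : α → ℝ} (hf : AEStronglyMeasurable f μ') {Cf : ℝ}
    (h : ∀ y, |f y| ≤ Cf) : Integrable f μ' :=
  ⟨hf, HasFiniteIntegral.of_bounded (C := Cf)
    (Eventually.of_forall fun y => by simpa [Real.norm_eq_abs] using h y)⟩

lemma aux_isOpen_range {X Y : Type*} [TopologicalSpace X] [TopologicalSpace Y]
    [LocallyCompactSpace X] [T2Space Y] {f : X → Y}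
    (hf : Topology.IsEmbedding f) (hd : DenseRange f) : IsOpen (Set.range f) := by
  rw [isOpen_iff_forall_mem_open]
  rintro y ⟨x, rfl⟩
  obtain ⟨K, hKc, hKn⟩ := exists_compact_mem_nhds x
  obtain ⟨O, hO, hpre⟩ := (hf.isInducing.isOpen_iff).1 (isOpen_interior (s := K))
  have h1 : O ⊆ closure (O ∩ Set.range f) := hd.open_subset_closure_inter hO
  have h2 : O ∩ Set.range f = f '' (interior K) := by
    rw [← hpre, Set.image_preimage_eq_inter_range, Set.inter_comm]
  have h3 : closure (f '' interior K) ⊆ f '' K := by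
    refine closure_minimal (Set.image_mono interior_subset) ?_
    exact (hKc.image hf.continuous).isClosed
  refine ⟨O, ?_, hO, ?_⟩
  · intro z hz
    exact Set.image_subset_range f K (h3 (h2 ▸ h1 hz))
  · have : x ∈ f ⁻¹' O := by rw [hpre]; exact mem_interior_iff_mem_nhds.2 hKn
    exact this

lemma aux_kernel_aemeasurable {X B : Type*} [MeasurableSpace X]
    [TopologicalSpace B] [CompactSpace B] [TopologicalSpace.MetrizableSpace B]
    [MeasurableSpace B] [BorelSpace B]
    (ν : X → Measure B) (hprob : ∀ x, IsProbabilityMeasure (ν x))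
    (σ : Measure X)
    (hmeas : ∀ Ψ : C(B, ℝ), AEMeasurable (fun x => ∫ s, Ψ s ∂(ν x)) σ)
    (H : X × B → ℝ) (hH : Measurable H) (M : ℝ) (hHb : ∀ z, ‖H z‖ ≤ M) :
    AEMeasurable (fun x => ∫ t, H (x, t) ∂(ν x)) σ := by
  letI : MetricSpace B := TopologicalSpace.metrizableSpaceMetric B
  -- Step 1 : closed sets
  have hclosed : ∀ C : Set B, IsClosed C →
      AEMeasurable (fun x => ((ν x) C).toReal) σ := by
    intro C hC
    have δpos : ∀ n : ℕ, (0:ℝ) < 1 / (n + 1) := fun n => by positivity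
    have δlim : Tendsto (fun n : ℕ => 1 / ((n:ℝ) + 1)) atTop (𝓝 0) :=
      tendsto_one_div_add_atTop_nhds_zero_nat
    set Ψ : ℕ → C(B, ℝ) := fun n =>
      ⟨fun t => ((thickenedIndicator (δpos n) C t : ℝ≥0) : ℝ),
        NNReal.continuous_coe.comp (thickenedIndicator (δpos n) C).continuous⟩ with hΨ
    have key : ∀ x, Tendsto (fun n => ∫ t, Ψ n t ∂(ν x)) atTop (𝓝 ((ν x) C).toReal) := by
      intro x
      have h1 := tendsto_lintegral_thickenedIndicator_of_isClosed (ν x) hC δpos δlim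
      have h2 : ∀ n, ∫ t, Ψ n t ∂(ν x)
          = (∫⁻ t, ((thickenedIndicator (δpos n) C t : ℝ≥0) : ℝ≥0∞) ∂(ν x)).toReal := by
        intro n
        simp only [hΨ, ContinuousMap.coe_mk]
        rw [integral_eq_lintegral_of_nonneg_ae (Eventually.of_forall fun t => NNReal.coe_nonneg _)
          (((Ψ n).continuous.aestronglyMeasurable).congr (by simp [hΨ]))]
        congr 1
        refine lintegral_congr fun t => ?_
        simp [ENNReal.ofReal_coe_nnreal]
      have h3 : Tendsto (fun n =>
          (∫⁻ t, ((thickenedIndicator (δpos n) C t : ℝ≥0) : ℝ≥0∞) ∂(ν x)).toReal) atTop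
          (𝓝 ((ν x) C).toReal) :=
        (ENNReal.tendsto_toReal (measure_ne_top (ν x) C)).comp h1
      simpa [h2] using h3
    exact aemeasurable_of_tendsto_metrizable_ae' (fun n => hmeas (Ψ n))
      (Eventually.of_forall key)
  -- union helper
  have hUnion : ∀ (g : ℕ → X → Set B), (∀ i x, MeasurableSet (g i x)) →
      (∀ x, Pairwise (Function.onFun Disjoint fun i => g i x)) →
      (∀ i, AEMeasurable (fun x => ((ν x) (g i x)).toReal) σ) →
      AEMeasurable (fun x => ((ν x) (⋃ i, g i x)).toReal) σ := by
    intro g hgm hgd hgae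
    have hmono : ∀ x, Monotone (fun N => ⋃ i ∈ Finset.range N, g i x) := by
      intro x N N' hNN'
      exact Set.biUnion_subset_biUnion_left (fun i hi =>
        Finset.mem_range.2 (lt_of_lt_of_le (Finset.mem_range.1 hi) hNN'))
    have hlim : ∀ x, Tendsto (fun N => ((ν x) (⋃ i ∈ Finset.range N, g i x)).toReal) atTop
        (𝓝 (((ν x) (⋃ i, g i x)).toReal)) := by
      intro x
      have h1 : Tendsto (fun N => (ν x) (⋃ i ∈ Finset.range N, g i x)) atTop
          (𝓝 ((ν x) (⋃ N, ⋃ i ∈ Finset.range N, g i x))) :=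
        tendsto_measure_iUnion_atTop (hmono x)
      have h2 : (⋃ N, ⋃ i ∈ Finset.range N, g i x) = ⋃ i, g i x := by
        ext b; simp only [Set.mem_iUnion, Finset.mem_range]
        exact ⟨fun ⟨N, i, _, h⟩ => ⟨i, h⟩, fun ⟨i, h⟩ => ⟨i + 1, i, Nat.lt_succ_self i, h⟩⟩
      rw [h2] at h1
      exact (ENNReal.tendsto_toReal (measure_ne_top _ _)).comp h1
    have hN : ∀ N, AEMeasurable (fun x => ((ν x) (⋃ i ∈ Finset.range N, g i x)).toReal) σ := by
      intro N
      have heq : ∀ x, ((ν x) (⋃ i ∈ Finset.range N, g i x)).toReal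
          = ∑ i ∈ Finset.range N, ((ν x) (g i x)).toReal := by
        intro x
        rw [measure_biUnion_finset ?_ (fun i _ => hgm i x)]
        · exact ENNReal.toReal_sum (fun i _ => measure_ne_top _ _)
        · intro i _ i' _ hii'
          exact hgd x hii'
      simp only [heq]
      exact Finset.aemeasurable_fun_sum _ (fun i _ => hgae i)
    exact aemeasurable_of_tendsto_metrizable_ae' hN (Eventually.of_forall hlim)
  -- Step 2 : all Borel subsets of B
  have hborel : ∀ C : Set B, MeasurableSet C →
      AEMeasurable (fun x => ((ν x) C).toReal) σ := by
    have heq : (inferInstance : MeasurableSpace B)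
        = MeasurableSpace.generateFrom {s : Set B | IsClosed s} := by
      rw [BorelSpace.measurable_eq (α := B), borel_eq_generateFrom_isClosed]
    refine MeasurableSpace.induction_on_inter heq ?_ ?_ ?_ ?_ ?_
    · exact fun s hs t ht _ => hs.inter ht
    · simp
    · exact fun t ht => hclosed t ht
    · intro t htm hta
      have : ∀ x, ((ν x) tᶜ).toReal = 1 - ((ν x) t).toReal := by
        intro x
        haveI := hprob x
        rw [prob_compl_eq_one_sub htm, ENNReal.toReal_sub_of_le prob_le_one one_ne_top]
        simp
      simp only [this]
      exact (aemeasurable_const.sub hta)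
    · intro f hfd hfm hfa
      exact hUnion (fun i _ => f i) (fun i _ => hfm i) (fun _ => hfd) hfa
  -- Step 3 : sections of measurable sets in the product
  have hsec : ∀ S : Set (X × B), MeasurableSet S →
      AEMeasurable (fun x => ((ν x) (Prod.mk x ⁻¹' S)).toReal) σ := by
    refine MeasurableSpace.induction_on_inter
      (generateFrom_prod (α := X) (β := B)).symm
      isPiSystem_prod ?_ ?_ ?_ ?_
    · simp
    · rintro S ⟨A, hA, C, hC, rfl⟩
      have : (fun x => ((ν x) (Prod.mk x ⁻¹' (A ×ˢ C))).toReal)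
          = fun x => A.indicator (fun x => ((ν x) C).toReal) x := by
        funext x
        by_cases hx : x ∈ A
        · simp [Set.mk_preimage_prod_right hx, Set.indicator_of_mem hx]
        · simp [Set.mk_preimage_prod_right_eq_empty hx, Set.indicator_of_notMem hx]
      rw [this]
      exact (hborel C hC).indicator hA
    · intro S hSm hSa
      have : ∀ x, ((ν x) (Prod.mk x ⁻¹' Sᶜ)).toReal = 1 - ((ν x) (Prod.mk x ⁻¹' S)).toReal := by
        intro x
        haveI := hprob x
        rw [Set.preimage_compl,
          prob_compl_eq_one_sub (measurable_prodMk_left hSm),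
          ENNReal.toReal_sub_of_le prob_le_one one_ne_top]
        simp
      simp only [this]
      exact aemeasurable_const.sub hSa
    · intro f hfd hfm hfa
      have := hUnion (fun i x => Prod.mk x ⁻¹' f i) (fun i x => measurable_prodMk_left (hfm i))
        (fun x i i' hii' => (hfd hii').preimage _) hfa
      simpa [Set.preimage_iUnion] using this
  -- Step 4 : simple functions
  have hsimple : ∀ φ : SimpleFunc (X × B) ℝ,
      AEMeasurable (fun x => ∫ t, φ (x, t) ∂(ν x)) σ := by
    intro φ
    refine SimpleFunc.induction ?_ ?_ φ
    · intro c S hS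
      have : (fun x => ∫ t, (SimpleFunc.piecewise S hS (SimpleFunc.const _ c)
          (SimpleFunc.const _ (0:ℝ))) (x, t) ∂(ν x))
          = fun x => ((ν x) (Prod.mk x ⁻¹' S)).toReal • c := by
        funext x
        have : (fun t => (SimpleFunc.piecewise S hS (SimpleFunc.const _ c)
            (SimpleFunc.const _ (0:ℝ))) (x, t))
            = fun t => (Prod.mk x ⁻¹' S).indicator (fun _ => c) t := by
          funext t
          simp only [SimpleFunc.coe_piecewise, SimpleFunc.coe_const, Set.piecewise,
            Set.indicator, Set.mem_preimage]
          rfl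
        rw [this, integral_indicator_const _ (measurable_prodMk_left hS)]
        rfl
      rw [this]
      exact ((hsec S hS).smul_const c)
    · intro f g _ hfa hga
      have hint : ∀ (ψ : SimpleFunc (X × B) ℝ) x, Integrable (fun t => ψ (x, t)) (ν x) := by
        intro ψ x
        obtain ⟨Cb, hCb⟩ := ψ.exists_forall_norm_le
        haveI := hprob x
        exact ⟨(ψ.measurable.comp measurable_prodMk_left).aestronglyMeasurable,
          HasFiniteIntegral.of_bounded (C := Cb) (Eventually.of_forall fun t => hCb _)⟩
      have : (fun x => ∫ t, (f + g) (x, t) ∂(ν x))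
          = fun x => (∫ t, f (x, t) ∂(ν x)) + ∫ t, g (x, t) ∂(ν x) := by
        funext x
        simp only [SimpleFunc.coe_add, Pi.add_apply]
        exact integral_add (hint f x) (hint g x)
      rw [this]
      exact hfa.add hga
  -- Step 5 : bounded measurable functions
  set M' := max M 0 with hM'
  have hsm : StronglyMeasurable H := hH.stronglyMeasurable
  have hb' : ∀ z, ‖H z‖ ≤ M' := fun z => le_trans (hHb z) (le_max_left _ _)
  have hlim : ∀ x, Tendsto (fun n => ∫ t, (hsm.approxBounded M' n) (x, t) ∂(ν x)) atTop
      (𝓝 (∫ t, H (x, t) ∂(ν x))) := by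
    intro x
    haveI := hprob x
    refine tendsto_integral_of_dominated_convergence (fun _ => M') ?_ (integrable_const M')
      ?_ ?_
    · exact fun n => ((hsm.approxBounded M' n).measurable.comp
        measurable_prodMk_left).aestronglyMeasurable
    · intro n
      exact Eventually.of_forall fun t =>
        hsm.norm_approxBounded_le (le_max_right M 0) n (x, t)
    · exact Eventually.of_forall fun t =>
        hsm.tendsto_approxBounded_of_norm_le (hb' (x, t))
  exact aemeasurable_of_tendsto_metrizable_ae'
    (fun n => hsimple (hsm.approxBounded M' n)) (Eventually.of_forall hlim)


/-- Remark 5 of the paper: if `(u_k, w_k)` generates the triple `(σ, ν̂, μ̂)`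
and `u_k → u` strongly in `L^q`, then for a.e. `x ∈ Ω`, `μ̂_{x,s}` is the Dirac measure at
`u(x)` for `ν̂_x`-a.e. `s ∈ ℝ^{m×n}`. -/
theorem statement3
    (n m : ℕ) (Ω : Set (En n)) (hΩo : IsOpen Ω) (hΩc : IsConnected Ω)
    (hΩb : Bornology.IsBounded Ω)
    (q p : ℝ) (hq : 1 ≤ q) (hp : 1 ≤ p)
    (βU : Type) [TopologicalSpace βU] [CompactSpace βU] [TopologicalSpace.MetrizableSpace βU]
    [MeasurableSpace βU] [BorelSpace βU]
    (βR : Type) [TopologicalSpace βR] [CompactSpace βR] [TopologicalSpace.MetrizableSpace βR]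
    [MeasurableSpace βR] [BorelSpace βR]
    (ιU : Vec m → βU) (hιU : Topology.IsEmbedding ιU) (hιUd : DenseRange ιU)
    (ιR : Mat m n → βR) (hιR : Topology.IsEmbedding ιR) (hιRd : DenseRange ιR)
    (u : ℕ → En n → Vec m) (w : ℕ → En n → Mat m n)
    (hu : ∀ k, MemLp (u k) (ENNReal.ofReal q) (volume.restrict Ω))
    (hw : ∀ k, MemLp (w k) (ENNReal.ofReal p) (volume.restrict Ω))
    (hubd : ∃ C : ℝ≥0, ∀ k, eLpNorm (u k) (ENNReal.ofReal q) (volume.restrict Ω) ≤ C)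
    (hwbd : ∃ C : ℝ≥0, ∀ k, eLpNorm (w k) (ENNReal.ofReal p) (volume.restrict Ω) ≤ C)
    (σ : Measure (En n)) (hσfin : IsFiniteMeasure σ) (hσsupp : σ (closure Ω)ᶜ = 0)
    (νh : En n → Measure βR) (μh : βR → En n → Measure βU)
    (hνhprob : ∀ x, IsProbabilityMeasure (νh x))
    (hμhprob : ∀ s x, IsProbabilityMeasure (μh s x))
    (hνhmeas : ∀ Ψ : C(βR, ℝ), AEMeasurable (fun x => ∫ s, Ψ s ∂(νh x)) σ)
    (hμhmeas : ∀ F : C(βU, ℝ), Measurable (fun q' : En n × βR => ∫ r, F r ∂(μh q'.2 q'.1)))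
    (hgen : GeneratesTriple p Ω ιU ιR u w σ νh μh)
    (ulim : En n → Vec m) (hulim : MemLp ulim (ENNReal.ofReal q) (volume.restrict Ω))
    (hstrong : Tendsto (fun k =>
        eLpNorm (fun x => u k x - ulim x) (ENNReal.ofReal q) (volume.restrict Ω))
      atTop (𝓝 0)) :
    ∀ᵐ x ∂(volume.restrict Ω), ∀ᵐ t ∂(νh x),
      t ∈ Set.range ιR → μh t x = Measure.dirac (ιU (ulim x)) := by
  classical
  letI mU : MetricSpace βU := TopologicalSpace.metrizableSpaceMetric βU
  letI mR : MetricSpace βR := TopologicalSpace.metrizableSpaceMetric βR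
  -- finiteness of the volume of Ω
  have hΩvol : volume Ω < ∞ := by
    obtain ⟨R, hR⟩ := hΩb.subset_closedBall 0
    exact lt_of_le_of_lt (measure_mono hR) (isCompact_closedBall 0 R).measure_lt_top
  haveI hfinvol : IsFiniteMeasure (volume.restrict Ω) :=
    ⟨by rw [Measure.restrict_apply_univ]; exact hΩvol⟩
  -- measurable representative of the limit
  have hulsm := hulim.aestronglyMeasurable
  set u' : En n → Vec m := hulsm.mk ulim with hu'def
  have hu'meas : StronglyMeasurable u' := hulsm.stronglyMeasurable_mk
  have hu'ae : ulim =ᵐ[volume.restrict Ω] u' := hulsm.ae_eq_mk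
  set a : En n → βU := fun x => ιU (u' x) with hadef
  have hameas : Measurable a := hιU.continuous.measurable.comp hu'meas.measurable
  -- diameter bound for βU
  set D : ℝ := diam (univ : Set βU) with hDdef
  have hD : ∀ r b : βU, dist r b ≤ D := fun r b =>
    dist_le_diam_of_mem isCompact_univ.isBounded trivial trivial
  have hD0 : 0 ≤ D := diam_nonneg
  -- the cut-off functions χ j
  have hWopen : IsOpen (Set.range ιR) := aux_isOpen_range hιR hιRd
  have hχex : ∀ j : ℕ, ∃ (χ : C(βR, ℝ)) (C : ℝ), (∀ t, χ t ∈ Icc (0:ℝ) 1) ∧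
      (∀ z : Mat m n, ‖z‖ ≤ (j:ℝ) → χ (ιR z) = 1) ∧ 1 ≤ C ∧
      (∀ z : Mat m n, χ (ιR z) * (1 + ‖z‖ ^ p) ≤ C) := by
    intro j
    have hKc : IsCompact (ιR '' closedBall (0 : Mat m n) j) :=
      (isCompact_closedBall _ _).image hιR.continuous
    obtain ⟨L, hLc, hKL, hLW⟩ := exists_compact_between hKc hWopen (image_subset_range _ _)
    obtain ⟨f, hf0, hf1, hf01⟩ := exists_continuous_zero_one_of_isClosed
      (isOpen_interior (s := L)).isClosed_compl hKc.isClosed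
      (Set.disjoint_left.mpr fun x hx hxK => hx (hKL hxK))
    have hpre : IsCompact (ιR ⁻¹' L) := hιR.isInducing.isCompact_preimage' hLc hLW
    obtain ⟨R, hR⟩ := hpre.isBounded.subset_closedBall 0
    set R' : ℝ := max R 0 with hR'
    refine ⟨f, 1 + R' ^ p, hf01, ?_, ?_, ?_⟩
    · intro z hz
      exact hf1 (mem_image_of_mem _ (by rwa [mem_closedBall_zero_iff]))
    · have : (0:ℝ) ≤ R' ^ p := Real.rpow_nonneg (le_max_right R 0) p
      linarith
    · intro z
      by_cases hz : f (ιR z) = 0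
      · rw [hz, zero_mul]
        have : (0:ℝ) ≤ R' ^ p := Real.rpow_nonneg (le_max_right R 0) p
        linarith
      · have hzL : ιR z ∈ interior L := by
          by_contra hmem
          exact hz (hf0 hmem)
        have hzB : ‖z‖ ≤ R' := by
          have : z ∈ closedBall (0 : Mat m n) R := hR (Set.mem_preimage.mpr (interior_subset (s := L) hzL))
          rw [mem_closedBall_zero_iff] at this
          exact le_trans this (le_max_left R 0)
        have h1 : ‖z‖ ^ p ≤ R' ^ p :=
          Real.rpow_le_rpow (norm_nonneg z) hzB (by linarith)
        have h2 : (0:ℝ) ≤ 1 + ‖z‖ ^ p := by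
          have := Real.rpow_nonneg (norm_nonneg z) p; linarith
        calc f (ιR z) * (1 + ‖z‖ ^ p) ≤ 1 * (1 + ‖z‖ ^ p) :=
              mul_le_mul_of_nonneg_right (hf01 (ιR z)).2 h2
          _ = 1 + ‖z‖ ^ p := one_mul _
          _ ≤ 1 + R' ^ p := by linarith
  choose χ Cb hχIcc hχone hCb1 hχbd using hχex
  -- dense sequence in βU
  haveI : Nonempty βU := ⟨ιU 0⟩
  obtain ⟨e, he⟩ : ∃ e : ℕ → βU, DenseRange e := by
    obtain ⟨cset, hcc, hcd⟩ := TopologicalSpace.exists_countable_dense βU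
    obtain ⟨e, rfl⟩ := hcc.exists_eq_range hcd.nonempty
    exact ⟨e, hcd⟩
  -- integrability of distance functions
  have hdint : ∀ (b : βU) (t : βR) (x : En n), Integrable (fun r => dist r b) (μh t x) := by
    intro b t x
    haveI := hμhprob t x
    exact aux_integrable_of_bounded ((continuous_id.dist continuous_const).aestronglyMeasurable)
      (fun r => by rw [abs_of_nonneg dist_nonneg]; exact hD r b)
  have hdnn : ∀ (b : βU) (t : βR) (x : En n), 0 ≤ ∫ r, dist r b ∂(μh t x) := fun b t x =>
    integral_nonneg fun r => dist_nonneg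
  have hdbd : ∀ (b : βU) (t : βR) (x : En n), (∫ r, dist r b ∂(μh t x)) ≤ D := by
    intro b t x
    haveI := hμhprob t x
    calc (∫ r, dist r b ∂(μh t x)) ≤ ∫ _, D ∂(μh t x) :=
          integral_mono (hdint b t x) (integrable_const D) (fun r => hD r b)
      _ = D := by simp
  have htri : ∀ (b c : βU) (t : βR) (x : En n),
      (∫ r, dist r b ∂(μh t x)) ≤ (∫ r, dist r c ∂(μh t x)) + dist c b := by
    intro b c t x
    haveI := hμhprob t x
    calc (∫ r, dist r b ∂(μh t x)) ≤ ∫ r, (dist r c + dist c b) ∂(μh t x) :=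
          integral_mono (hdint b t x) ((hdint c t x).add (integrable_const _))
            (fun r => dist_triangle r c b)
      _ = (∫ r, dist r c ∂(μh t x)) + dist c b := by
          rw [integral_add (hdint c t x) (integrable_const _)]; simp
  -- G
  set G : En n × βR → ℝ := fun z => ∫ r, dist r (a z.1) ∂(μh z.2 z.1) with hGdef
  have hGnn : ∀ z, 0 ≤ G z := fun z => hdnn _ _ _
  have hGbd : ∀ z, G z ≤ D := fun z => hdbd _ _ _
  have hGeq : ∀ z : En n × βR,
      G z = ⨅ i : ℕ, ((∫ r, dist r (e i) ∂(μh z.2 z.1)) + dist (e i) (a z.1)) := by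
    rintro ⟨x, t⟩
    have hbdd : BddBelow (Set.range fun i : ℕ =>
        (∫ r, dist r (e i) ∂(μh t x)) + dist (e i) (a x)) := by
      refine ⟨0, ?_⟩
      rintro y ⟨i, rfl⟩
      have h1 := hdnn (e i) t x
      have h2 : (0:ℝ) ≤ dist (e i) (a x) := dist_nonneg
      dsimp only
      linarith
    refine le_antisymm (le_ciInf fun i => htri (a x) (e i) t x) ?_
    refine aux_le_of_forall_pos_le_add fun ε hε => ?_
    obtain ⟨i, hi⟩ := he.exists_dist_lt (a x) (half_pos hε)
    calc (⨅ i : ℕ, ((∫ r, dist r (e i) ∂(μh t x)) + dist (e i) (a x)))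
        ≤ (∫ r, dist r (e i) ∂(μh t x)) + dist (e i) (a x) := ciInf_le hbdd i
      _ ≤ ((∫ r, dist r (a x) ∂(μh t x)) + dist (a x) (e i)) + dist (e i) (a x) := by
          have := htri (e i) (a x) t x
          linarith
      _ ≤ G (x, t) + ε := by
          rw [dist_comm (e i) (a x)]
          have : G (x, t) = ∫ r, dist r (a x) ∂(μh t x) := rfl
          rw [this]
          linarith
  have hGmeas : Measurable G := by
    have : G = fun z => ⨅ i : ℕ,
        ((∫ r, dist r (e i) ∂(μh z.2 z.1)) + dist (e i) (a z.1)) := funext hGeq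
    rw [this]
    refine Measurable.iInf fun i => Measurable.add ?_ ?_
    · exact hμhmeas ⟨fun r => dist r (e i), continuous_id.dist continuous_const⟩
    · exact measurable_const.dist (hameas.comp measurable_fst)
  -- L¹-convergence of distances
  have hJ : Tendsto (fun k => ∫ x in Ω, dist (ιU (u k x)) (ιU (u' x)) ∂volume)
      atTop (𝓝 0) := by
    have hq0 : (ENNReal.ofReal q) ≠ 0 := by simp [ENNReal.ofReal_eq_zero]; linarith
    have htm : TendstoInMeasure (volume.restrict Ω) u atTop ulim :=
      tendstoInMeasure_of_tendsto_eLpNorm hq0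
        (fun k => (hu k).aestronglyMeasurable) hulim.aestronglyMeasurable
        (by convert hstrong using 2 with k; rfl)
    apply tendsto_of_subseq_tendsto
    intro ns hns
    have htm' : TendstoInMeasure (volume.restrict Ω) (fun i => u (ns i)) atTop ulim :=
      fun ε hε => (htm ε hε).comp hns
    obtain ⟨ms, hms, hae⟩ := htm'.exists_seq_tendsto_ae
    refine ⟨ms, ?_⟩
    have h0 : (0:ℝ) = ∫ (_ : En n), (0:ℝ) ∂(volume.restrict Ω) := by simp
    rw [h0]
    refine tendsto_integral_of_dominated_convergence (fun _ => D) ?_ (integrable_const D) ?_ ?_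
    · intro i
      exact ((hιU.continuous.comp_aestronglyMeasurable
        (hu (ns (ms i))).aestronglyMeasurable).dist
        ((hιU.continuous.comp_aestronglyMeasurable hu'meas.aestronglyMeasurable)))
    · intro i
      refine Eventually.of_forall fun x => ?_
      rw [Real.norm_eq_abs, abs_of_nonneg dist_nonneg]
      exact hD _ _
    · filter_upwards [hae, hu'ae] with x hx hxe
      have h1 : Tendsto (fun i => ιU (u (ns (ms i)) x)) atTop (𝓝 (ιU (ulim x))) :=
        (hιU.continuous.tendsto _).comp hx
      have h2 := h1.dist (tendsto_const_nhds (α := ℕ) (x := ιU (u' x)))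
      rw [hxe, dist_self] at h2
      exact h2
  -- the base case of hgen
  have hgen1 : ∀ g : En n → ℝ, Continuous g →
      Tendsto (fun k => ∫ x in Ω, g x * (1 + ‖w k x‖ ^ p)) atTop
        (𝓝 (∫ x in closure Ω, g x ∂σ)) := by
    intro g hg
    have h := hgen g hg (ContinuousMap.const βU 1) (ContinuousMap.const βR 1)
    have h1 : ∀ x : En n,
        (∫ s, (∫ r, (1:ℝ) ∂(μh s x)) ∂(νh x)) = 1 := by
      intro x
      haveI := hνhprob x
      have h2 : ∀ s : βR, (∫ r, (1:ℝ) ∂(μh s x)) = 1 := fun s => by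
        haveI := hμhprob s x; simp
      simp only [h2]
      simp
    simpa only [ContinuousMap.const_apply, mul_one, h1] using h
  -- integrability of the weights
  have hwint : ∀ k, Integrable (fun x => 1 + ‖w k x‖ ^ p) (volume.restrict Ω) := by
    intro k
    have h1 := (hw k).integrable_norm_rpow (by simp [ENNReal.ofReal_eq_zero]; linarith)
      ENNReal.ofReal_ne_top
    rw [ENNReal.toReal_ofReal (by linarith : (0:ℝ) ≤ p)] at h1
    exact (integrable_const 1).add h1
  -- comparison between σ and volume on Ω
  have hkey : ∀ g : En n → ℝ, Continuous g → (∀ x, g x ∈ Icc (0:ℝ) 1) →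
      (∫ x in Ω, g x) ≤ ∫ x in closure Ω, g x ∂σ := by
    intro g hg hg01
    have hg01' : ∀ x, 0 ≤ g x ∧ g x ≤ 1 := fun x => Set.mem_Icc.mp (hg01 x)
    refine ge_of_tendsto (hgen1 g hg) (Eventually.of_forall fun k => ?_)
    have hInt2 : Integrable (fun x => g x * (1 + ‖w k x‖ ^ p)) (volume.restrict Ω) :=
      (hwint k).bdd_mul hg.aestronglyMeasurable (Eventually.of_forall fun x => by
        rw [Real.norm_eq_abs, abs_of_nonneg (hg01' x).1]; exact (hg01' x).2)
    refine integral_mono ?_ hInt2 ?_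
    · exact aux_integrable_of_bounded hg.aestronglyMeasurable (Cf := 1)
        (fun x => abs_le.mpr ⟨by linarith [(hg01' x).1], (hg01' x).2⟩)
    · intro x
      dsimp only
      have h1 : (0:ℝ) ≤ ‖w k x‖ ^ p := Real.rpow_nonneg (norm_nonneg _) p
      nlinarith [(hg01' x).1, mul_nonneg (hg01' x).1 h1]
  have hUσ : ∀ U : Set (En n), IsOpen U → volume (U ∩ Ω) ≤ σ U := by
    intro U hU
    have hUΩ : IsOpen (U ∩ Ω) := hU.inter hΩo
    rw [hUΩ.measure_eq_iSup_isCompact]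
    refine iSup₂_le fun K hKsub => iSup_le fun hK => ?_
    obtain ⟨f, hf1, hf0, _, hf01⟩ := exists_continuous_one_zero_of_isCompact hK
      hUΩ.isClosed_compl (Set.disjoint_left.mpr fun x hxK hxc => hxc (hKsub hxK))
    have hf01' : ∀ x, 0 ≤ f x ∧ f x ≤ 1 := fun x => Set.mem_Icc.mp (hf01 x)
    have hfK : ∀ x ∈ K, f x = 1 := fun x hx => by simpa using hf1 hx
    have step1 : (volume K).toReal ≤ ∫ x in Ω, f x := by
      have heq : (∫ x in Ω, K.indicator (fun _ => (1:ℝ)) x) = (volume K).toReal := by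
        rw [integral_indicator_const (1:ℝ) hK.measurableSet]
        unfold Measure.real
        rw [Measure.restrict_apply hK.measurableSet]
        rw [Set.inter_eq_self_of_subset_left (subset_trans hKsub Set.inter_subset_right)]
        simp
      rw [← heq]
      refine integral_mono ?_ ?_ ?_
      · exact aux_integrable_of_bounded
          ((measurable_const.indicator hK.measurableSet).aestronglyMeasurable) (Cf := 1)
          (fun x => by by_cases hx : x ∈ K <;> simp [Set.indicator, hx])
      · exact aux_integrable_of_bounded f.continuous.aestronglyMeasurable (Cf := 1)
          (fun x => abs_le.mpr ⟨by linarith [(hf01' x).1], (hf01' x).2⟩)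
      · intro x
        by_cases hx : x ∈ K
        · rw [Set.indicator_of_mem hx, hfK x hx]
        · rw [Set.indicator_of_notMem hx]; exact (hf01' x).1
    have step2 : (∫ x in Ω, f x) ≤ ∫ x in closure Ω, f x ∂σ := hkey f f.continuous hf01
    have step3 : (∫ x in closure Ω, f x ∂σ) ≤ (σ U).toReal := by
      have heq : (∫ x in closure Ω, U.indicator (fun _ => (1:ℝ)) x ∂σ)
          = (σ (U ∩ closure Ω)).toReal := by
        rw [integral_indicator_const (1:ℝ) hU.measurableSet]
        unfold Measure.real
        rw [Measure.restrict_apply hU.measurableSet]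
        simp
      have hle : (∫ x in closure Ω, f x ∂σ)
          ≤ ∫ x in closure Ω, U.indicator (fun _ => (1:ℝ)) x ∂σ := by
        refine integral_mono ?_ ?_ ?_
        · exact aux_integrable_of_bounded f.continuous.aestronglyMeasurable (Cf := 1)
            (fun x => abs_le.mpr ⟨by linarith [(hf01' x).1], (hf01' x).2⟩)
        · exact aux_integrable_of_bounded
            ((measurable_const.indicator hU.measurableSet).aestronglyMeasurable) (Cf := 1)
            (fun x => by by_cases hx : x ∈ U <;> simp [Set.indicator, hx])
        · intro x
          by_cases hx : x ∈ U
          · rw [Set.indicator_of_mem hx]; exact (hf01' x).2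
          · rw [Set.indicator_of_notMem hx]
            have : x ∈ (U ∩ Ω)ᶜ := fun hmem => hx hmem.1
            simp [hf0 this]
      refine le_trans hle ?_
      rw [heq]
      exact ENNReal.toReal_mono (measure_ne_top σ U) (measure_mono Set.inter_subset_left)
    have hfin1 : volume K ≠ ∞ := hK.measure_lt_top.ne
    have hfin2 : σ U ≠ ∞ := measure_ne_top σ U
    rw [← ENNReal.ofReal_toReal hfin1, ← ENNReal.ofReal_toReal hfin2]
    exact ENNReal.ofReal_le_ofReal (by linarith)
  have hcomp : ∀ N : Set (En n), MeasurableSet N → σ N = 0 → volume (N ∩ Ω) = 0 := by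
    intro N hN hN0
    by_contra hpos
    have hposlt : (0:ℝ≥0∞) < volume (N ∩ Ω) := pos_iff_ne_zero.mpr hpos
    obtain ⟨U, hUN, hUo, hUlt⟩ := Set.exists_isOpen_lt_of_lt N (volume (N ∩ Ω))
      (by rw [hN0]; exact hposlt)
    have h1 : volume (N ∩ Ω) ≤ volume (U ∩ Ω) :=
      measure_mono (Set.inter_subset_inter_left _ hUN)
    have h2 := hUσ U hUo
    exact absurd (lt_of_le_of_lt (le_trans h1 h2) hUlt) (lt_irrefl _)
  have haetrans : ∀ (P : En n → Prop), (∀ᵐ x ∂σ, P x) → (∀ᵐ x ∂(volume.restrict Ω), P x) := by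
    intro P hP
    rw [ae_iff] at hP ⊢
    obtain ⟨N, hsub, hNm, hN0⟩ := exists_measurable_superset_of_null hP
    refine le_antisymm (le_trans (measure_mono hsub) ?_) (by positivity)
    rw [Measure.restrict_apply hNm]
    exact le_of_eq (hcomp N hNm hN0)
  -- σ is supported on the closure of Ω
  have hσres : σ.restrict (closure Ω) = σ := by
    have h := Measure.restrict_add_restrict_compl (μ := σ)
      (isClosed_closure (s := Ω)).measurableSet
    rwa [Measure.restrict_eq_zero.mpr hσsupp, add_zero] at h
  -- continuous approximation of indicator functions
  have happrox : ∀ P : Set (En n), MeasurableSet P → ∀ δ : ℝ, 0 < δ → ∃ g : En n → ℝ,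
      Continuous g ∧ (∀ x, g x ∈ Icc (0:ℝ) 1) ∧
      (∫ x, |g x - P.indicator (fun _ => (1:ℝ)) x| ∂σ) ≤ δ ∧
      (∫ x, |g x - P.indicator (fun _ => (1:ℝ)) x| ∂(volume.restrict Ω)) ≤ δ := by
    intro P hP δ hδ
    set μtot : Measure (En n) := σ + volume.restrict Ω with hμtot
    haveI : IsFiniteMeasure μtot := by
      constructor
      rw [hμtot, Measure.coe_add, Pi.add_apply]
      exact ENNReal.add_lt_top.mpr ⟨measure_lt_top σ univ, measure_lt_top _ univ⟩
    have hμP : μtot P ≠ ∞ := measure_ne_top _ _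
    obtain ⟨U, hUP, hUo, hUlt⟩ := Set.exists_isOpen_lt_of_lt P
      (μtot P + ENNReal.ofReal (δ/2))
      (lt_add_right hμP (ENNReal.ofReal_pos.mpr (by linarith)).ne')
    obtain ⟨F, hFP, hFc, hFlt⟩ := hP.exists_isClosed_lt_add (μ := μtot) (ε := ENNReal.ofReal (δ/2)) hμP
      (ENNReal.ofReal_pos.mpr (by linarith)).ne'
    have hdiff : μtot (U \ F) ≤ ENNReal.ofReal δ := by
      have hFU : F ⊆ U := subset_trans hFP hUP
      rw [measure_diff hFU hFc.measurableSet.nullMeasurableSet (measure_ne_top _ _),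
        tsub_le_iff_right]
      calc μtot U ≤ μtot P + ENNReal.ofReal (δ/2) := le_of_lt hUlt
        _ ≤ (μtot F + ENNReal.ofReal (δ/2)) + ENNReal.ofReal (δ/2) :=
            add_le_add_left (le_of_lt hFlt) _
        _ = ENNReal.ofReal δ + μtot F := by
            rw [add_assoc, ← ENNReal.ofReal_add (by linarith) (by linarith), add_halves,
              add_comm]
    obtain ⟨g, hg0, hg1, hg01⟩ := exists_continuous_zero_one_of_isClosed
      hUo.isClosed_compl hFc
      (Set.disjoint_left.mpr fun x hx hxF => hx (subset_trans hFP hUP hxF))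
    have hg01' : ∀ x, 0 ≤ g x ∧ g x ≤ 1 := fun x => Set.mem_Icc.mp (hg01 x)
    have hptw : ∀ x, |g x - P.indicator (fun _ => (1:ℝ)) x|
        ≤ (U \ F).indicator (fun _ => (1:ℝ)) x := by
      intro x
      have hind : ∀ (S : Set (En n)), S.indicator (fun _ => (1:ℝ)) x = 0 ∨
          (S.indicator (fun _ => (1:ℝ)) x = 1 ∧ x ∈ S) := by
        intro S
        by_cases hx : x ∈ S
        · exact Or.inr ⟨Set.indicator_of_mem hx _, hx⟩
        · exact Or.inl (Set.indicator_of_notMem hx _)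
      by_cases hxF : x ∈ F
      · have h1 : g x = 1 := by simpa using hg1 hxF
        have h2 : P.indicator (fun _ => (1:ℝ)) x = 1 := Set.indicator_of_mem (hFP hxF) _
        have h3 : (0:ℝ) ≤ (U \ F).indicator (fun _ => (1:ℝ)) x := by
          rcases hind (U \ F) with h | h
          · rw [h]
          · rw [h.1]; norm_num
        rw [h1, h2]
        simpa using h3
      · by_cases hxU : x ∈ U
        · have h4 : (U \ F).indicator (fun _ => (1:ℝ)) x = 1 :=
            Set.indicator_of_mem ((Set.mem_diff x).mpr ⟨hxU, hxF⟩) _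
          rw [h4]
          have h1 := (hg01' x).1
          have h2 := (hg01' x).2
          rcases hind P with h | h
          · rw [h]; rw [abs_le]; constructor <;> linarith
          · rw [h.1]; rw [abs_le]; constructor <;> linarith
        · have h1 : g x = 0 := by simpa using hg0 (Set.mem_compl hxU)
          have h2 : P.indicator (fun _ => (1:ℝ)) x = 0 :=
            Set.indicator_of_notMem (fun hxP => hxU (hUP hxP)) _
          have h3 : (U \ F).indicator (fun _ => (1:ℝ)) x = 0 :=
            Set.indicator_of_notMem (fun h => hxU h.1) _
          rw [h1, h2, h3]
          simp
    have hbound : ∀ (ν' : Measure (En n)), IsFiniteMeasure ν' → ν' ≤ μtot →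
        (∫ x, |g x - P.indicator (fun _ => (1:ℝ)) x| ∂ν') ≤ δ := by
      intro ν' hν' hle
      haveI := hν'
      have hInt1 : Integrable (fun x => |g x - P.indicator (fun _ => (1:ℝ)) x|) ν' :=
        aux_integrable_of_bounded
          (((g.continuous.measurable.sub
            (measurable_const.indicator hP)).abs).aestronglyMeasurable) (Cf := 2)
          (fun x => by
            rw [abs_abs]
            have h1 := (hg01' x).1
            have h2 := (hg01' x).2
            by_cases hxP : x ∈ P
            · rw [Set.indicator_of_mem hxP]; rw [abs_le]; constructor <;> linarith
            · rw [Set.indicator_of_notMem hxP]; rw [abs_le]; constructor <;> linarith)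
      have hInt2 : Integrable ((U \ F).indicator (fun _ => (1:ℝ))) ν' :=
        aux_integrable_of_bounded
          ((measurable_const.indicator (hUo.measurableSet.diff hFc.measurableSet)).aestronglyMeasurable)
          (Cf := 1) (fun x => by by_cases hx : x ∈ U \ F <;> simp [Set.indicator, hx])
      calc (∫ x, |g x - P.indicator (fun _ => (1:ℝ)) x| ∂ν')
          ≤ ∫ x, (U \ F).indicator (fun _ => (1:ℝ)) x ∂ν' :=
            integral_mono hInt1 hInt2 hptw
        _ = (ν' (U \ F)).toReal := by
            rw [integral_indicator_const (1:ℝ) (hUo.measurableSet.diff hFc.measurableSet)]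
            simp [Measure.real]
        _ ≤ (μtot (U \ F)).toReal :=
            ENNReal.toReal_mono (measure_ne_top _ _) (hle _)
        _ ≤ (ENNReal.ofReal δ).toReal := ENNReal.toReal_mono ofReal_ne_top hdiff
        _ = δ := ENNReal.toReal_ofReal (by linarith)
    refine ⟨g, g.continuous, hg01, ?_, ?_⟩
    · exact hbound σ hσfin (by rw [hμtot]; exact Measure.le_add_right le_rfl)
    · exact hbound _ hfinvol (by rw [hμtot]; exact Measure.le_add_left le_rfl)
  -- THE MAIN ESTIMATE
  have main : ∀ j : ℕ, ∀ᵐ x ∂σ, (∫ t, χ j t * G (x, t) ∂(νh x)) = 0 := by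
    intro j
    set C : ℝ := Cb j with hCdef
    have hC1 : (1:ℝ) ≤ C := hCb1 j
    have hχG_int : ∀ x, Integrable (fun t => χ j t * G (x, t)) (νh x) := by
      intro x
      haveI := hνhprob x
      refine aux_integrable_of_bounded
        (((χ j).continuous.measurable.mul
          (hGmeas.comp measurable_prodMk_left)).aestronglyMeasurable) (Cf := D) ?_
      intro t
      rw [abs_of_nonneg (mul_nonneg (hχIcc j t).1 (hGnn _))]
      nlinarith [(hχIcc j t).1, (hχIcc j t).2, hGnn (x, t), hGbd (x, t)]
    have hχint : ∀ x, Integrable (fun t => χ j t) (νh x) := by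
      intro x
      haveI := hνhprob x
      exact aux_integrable_of_bounded (χ j).continuous.aestronglyMeasurable (Cf := 1)
        (fun t => abs_le.mpr ⟨by linarith [(hχIcc j t).1], (hχIcc j t).2⟩)
    set E : En n → ℝ := fun x => ∫ t, χ j t * G (x, t) ∂(νh x) with hEdef
    have hEmeas : AEMeasurable E σ := by
      refine aux_kernel_aemeasurable νh hνhprob σ hνhmeas
        (fun z => χ j z.2 * G z)
        (((χ j).continuous.measurable.comp measurable_snd).mul hGmeas) D ?_
      intro z
      rw [Real.norm_eq_abs, abs_of_nonneg (mul_nonneg (hχIcc j z.2).1 (hGnn z))]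
      nlinarith [(hχIcc j z.2).1, (hχIcc j z.2).2, hGnn z, hGbd z]
    have hEnn : ∀ x, 0 ≤ E x := fun x =>
      integral_nonneg fun t => mul_nonneg (hχIcc j t).1 (hGnn _)
    have hEbd : ∀ x, E x ≤ D := by
      intro x
      haveI := hνhprob x
      calc E x ≤ ∫ _, D ∂(νh x) := by
            refine integral_mono (hχG_int x) (integrable_const D) ?_
            intro t
            show χ j t * G (x, t) ≤ D
            nlinarith [(hχIcc j t).1, (hχIcc j t).2, hGnn (x, t), hGbd (x, t)]
        _ = D := by simp
    have hEint : Integrable E σ := aux_integrable_of_bounded hEmeas.aestronglyMeasurable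
      (Cf := D) (fun x => by rw [abs_of_nonneg (hEnn x)]; exact hEbd x)
    -- the ε-estimate
    have hest : ∀ ε : ℝ, 0 < ε → ε ≤ 1 →
        (∫ x, E x ∂σ) ≤ ε * (C * (volume Ω).toReal + (σ univ).toReal + 1) := by
      intro ε hε hε1
      obtain ⟨s, hs⟩ := isCompact_univ.elim_finite_subcover (fun b : βU => ball b ε)
        (fun b => isOpen_ball) (fun r _ => Set.mem_iUnion.2 ⟨r, mem_ball_self hε⟩)
      set l : List βU := s.toList with hl
      set N : ℕ := l.length with hN
      set e' : ℕ → βU := fun i => l.getD i (ιU 0) with he'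
      have hcov : ∀ b : βU, ∃ i, i < N ∧ dist b (e' i) < ε := by
        intro b
        obtain ⟨b', hb'⟩ := Set.mem_iUnion₂.1 (hs (Set.mem_univ b))
        obtain ⟨hb's, hb'd⟩ := hb'
        obtain ⟨i, hi, hib⟩ := List.mem_iff_getElem.1 (Finset.mem_toList.mpr hb's)
        refine ⟨i, hi, ?_⟩
        have : e' i = b' := by rw [he']; simp only; rw [List.getD_eq_getElem l _ hi, hib]
        rw [this]
        exact mem_ball.1 hb'd
      have hex : ∀ x : En n, ∃ i, i < N ∧ dist (a x) (e' i) < ε := fun x => hcov (a x)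
      set T : ℕ → Set (En n) := fun i => {x | dist (a x) (e' i) < ε} with hT
      have hTmeas : ∀ i, MeasurableSet (T i) :=
        fun i => measurableSet_lt (hameas.dist measurable_const) measurable_const
      set ind : En n → ℕ := fun x => Nat.find (hex x) with hind
      have hindlt : ∀ x, ind x < N := fun x => (Nat.find_spec (hex x)).1
      have hindT : ∀ x, x ∈ T (ind x) := fun x => (Nat.find_spec (hex x)).2
      set P : ℕ → Set (En n) := fun i => {x | ind x = i} with hP
      have hPmeas : ∀ i, MeasurableSet (P i) := by
        intro i
        have heq : P i = ({x | i < N ∧ x ∈ T i}) ∩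
            (⋂ i' ∈ Finset.range i, {x | ¬ (i' < N ∧ x ∈ T i')}) := by
          ext x
          simp only [hP, Set.mem_setOf_eq, hind, Set.mem_inter_iff, Set.mem_iInter,
            Finset.mem_range]
          rw [Nat.find_eq_iff]
          tauto
        rw [heq]
        refine MeasurableSet.inter ?_
          (MeasurableSet.biInter (Finset.range i).countable_toSet fun i' _ => ?_)
        · by_cases hi : i < N
          · have h2 : {x : En n | i < N ∧ x ∈ T i} = T i := by ext x; simp [hi]
            rw [h2]; exact hTmeas i
          · have h2 : {x : En n | i < N ∧ x ∈ T i} = ∅ := by ext x; simp [hi]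
            rw [h2]; exact MeasurableSet.empty
        · by_cases hi' : i' < N
          · have h2 : {x : En n | ¬ (i' < N ∧ x ∈ T i')} = (T i')ᶜ := by ext x; simp [hi']
            rw [h2]; exact (hTmeas i').compl
          · have h2 : {x : En n | ¬ (i' < N ∧ x ∈ T i')} = univ := by ext x; simp [hi']
            rw [h2]; exact MeasurableSet.univ
      -- the auxiliary functions X i
      set X : ℕ → En n → ℝ := fun i x =>
        ∫ t, (∫ r, dist r (e' i) ∂(μh t x)) * χ j t ∂(νh x) with hX
      have hYmeas : ∀ i, Measurable (fun z : En n × βR =>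
          (∫ r, dist r (e' i) ∂(μh z.2 z.1)) * χ j z.2) := by
        intro i
        exact (hμhmeas ⟨fun r => dist r (e' i), continuous_id.dist continuous_const⟩).mul
          ((χ j).continuous.measurable.comp measurable_snd)
      have hYint : ∀ i x, Integrable
          (fun t => (∫ r, dist r (e' i) ∂(μh t x)) * χ j t) (νh x) := by
        intro i x
        haveI := hνhprob x
        refine aux_integrable_of_bounded
          (((hYmeas i).comp measurable_prodMk_left).aestronglyMeasurable) (Cf := D) ?_
        intro t
        rw [abs_of_nonneg (mul_nonneg (hdnn _ _ _) (hχIcc j t).1)]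
        nlinarith [(hχIcc j t).1, (hχIcc j t).2, hdnn (e' i) t x, hdbd (e' i) t x]
      have hXmeas : ∀ i, AEMeasurable (X i) σ := by
        intro i
        refine aux_kernel_aemeasurable νh hνhprob σ hνhmeas _ (hYmeas i) D ?_
        intro z
        rw [Real.norm_eq_abs, abs_of_nonneg (mul_nonneg (hdnn _ _ _) (hχIcc j z.2).1)]
        nlinarith [(hχIcc j z.2).1, (hχIcc j z.2).2, hdnn (e' i) z.2 z.1, hdbd (e' i) z.2 z.1]
      have hXnn : ∀ i x, 0 ≤ X i x := fun i x =>
        integral_nonneg fun t => mul_nonneg (hdnn _ _ _) (hχIcc j t).1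
      have hXbd : ∀ i x, X i x ≤ D := by
        intro i x
        haveI := hνhprob x
        calc X i x ≤ ∫ _, D ∂(νh x) := by
              refine integral_mono (hYint i x) (integrable_const D) ?_
              intro t
              show (∫ r, dist r (e' i) ∂(μh t x)) * χ j t ≤ D
              nlinarith [(hχIcc j t).1, (hχIcc j t).2, hdnn (e' i) t x, hdbd (e' i) t x]
          _ = D := by simp
      -- pointwise estimate
      have hpt : ∀ x, E x ≤ ∑ i ∈ Finset.range N,
          (P i).indicator (fun _ => (1:ℝ)) x * (X i x + ε) := by
        intro x
        have hsum : ∑ i ∈ Finset.range N, (P i).indicator (fun _ => (1:ℝ)) x * (X i x + ε)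
            = X (ind x) x + ε := by
          have hz : ∀ i ∈ Finset.range N, i ≠ ind x →
              (P i).indicator (fun _ => (1:ℝ)) x * (X i x + ε) = 0 := by
            intro i _ hne
            have hnotmem : x ∉ P i := by
              intro h
              exact hne (Eq.symm (show ind x = i from h))
            rw [Set.indicator_of_notMem hnotmem, zero_mul]
          rw [Finset.sum_eq_single_of_mem (ind x) (Finset.mem_range.2 (hindlt x)) hz]
          rw [Set.indicator_of_mem (show x ∈ P (ind x) from rfl), one_mul]
        rw [hsum]
        haveI := hνhprob x
        have key : ∀ t, χ j t * G (x, t)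
            ≤ (∫ r, dist r (e' (ind x)) ∂(μh t x)) * χ j t + ε * χ j t := by
          intro t
          have h1 : G (x, t) ≤ (∫ r, dist r (e' (ind x)) ∂(μh t x)) + dist (e' (ind x)) (a x) :=
            htri (a x) (e' (ind x)) t x
          have h2 : dist (e' (ind x)) (a x) < ε := by
            rw [dist_comm]; exact hindT x
          have h3 := (hχIcc j t).1
          nlinarith [hGnn (x, t), hdnn (e' (ind x)) t x,
            mul_le_mul_of_nonneg_left h1 h3]
        calc E x ≤ ∫ t, ((∫ r, dist r (e' (ind x)) ∂(μh t x)) * χ j t + ε * χ j t) ∂(νh x) :=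
              integral_mono (hχG_int x) ((hYint (ind x) x).add ((hχint x).const_mul ε)) key
          _ = X (ind x) x + ε * ∫ t, χ j t ∂(νh x) := by
              rw [integral_add (hYint (ind x) x) ((hχint x).const_mul ε), integral_const_mul]
          _ ≤ X (ind x) x + ε := by
              have h1 : (∫ t, χ j t ∂(νh x)) ≤ 1 := by
                calc (∫ t, χ j t ∂(νh x)) ≤ ∫ _, (1:ℝ) ∂(νh x) :=
                      integral_mono (hχint x) (integrable_const 1) (fun t => (hχIcc j t).2)
                  _ = 1 := by simp
              have h2 : 0 ≤ ∫ t, χ j t ∂(νh x) := integral_nonneg fun t => (hχIcc j t).1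
              nlinarith
      -- integrability of the summands
      have hterm_int : ∀ i, Integrable
          (fun x => (P i).indicator (fun _ => (1:ℝ)) x * (X i x + ε)) σ := by
        intro i
        refine aux_integrable_of_bounded
          (((measurable_const.indicator (hPmeas i)).aemeasurable.mul
            ((hXmeas i).add aemeasurable_const)).aestronglyMeasurable) (Cf := D + ε) ?_
        intro x
        have h1 : (0:ℝ) ≤ (P i).indicator (fun _ => (1:ℝ)) x ∧
            (P i).indicator (fun _ => (1:ℝ)) x ≤ 1 := by
          by_cases hx : x ∈ P i <;> simp [Set.indicator, hx]
        rw [abs_of_nonneg (mul_nonneg h1.1 (by nlinarith [hXnn i x]))]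
        nlinarith [hXnn i x, hXbd i x, h1.1, h1.2]
      have hIle : (∫ x, E x ∂σ) ≤ ∑ i ∈ Finset.range N,
          ∫ x, (P i).indicator (fun _ => (1:ℝ)) x * (X i x + ε) ∂σ := by
        calc (∫ x, E x ∂σ)
            ≤ ∫ x, (∑ i ∈ Finset.range N,
                (P i).indicator (fun _ => (1:ℝ)) x * (X i x + ε)) ∂σ :=
              integral_mono hEint (integrable_finset_sum _ (fun i _ => hterm_int i)) hpt
          _ = ∑ i ∈ Finset.range N,
              ∫ x, (P i).indicator (fun _ => (1:ℝ)) x * (X i x + ε) ∂σ :=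
              integral_finset_sum _ (fun i _ => hterm_int i)
      -- choice of δ and of the continuous approximations
      have hCD : (0:ℝ) < C + D * C + D + 1 := by nlinarith
      set δ : ℝ := ε / ((N + 1) * (C + D * C + D + 1)) with hδdef
      have hδpos : 0 < δ := by
        refine div_pos hε (mul_pos ?_ hCD)
        positivity
      choose gi hgi_cont hgi_Icc hgi_σ hgi_vol using fun i => happrox (P i) (hPmeas i) δ hδpos
      -- the per-index estimate
      have hterm : ∀ i, (∫ x, (P i).indicator (fun _ => (1:ℝ)) x * (X i x + ε) ∂σ)
          ≤ ε * C * ((volume.restrict Ω) (P i)).toReal + ε * (σ (P i)).toReal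
            + δ * (C + D * C + D) := by
        intro i
        have hgi01 : ∀ x, 0 ≤ gi i x ∧ gi i x ≤ 1 := fun x => Set.mem_Icc.mp (hgi_Icc i x)
        have hIndInt : Integrable (fun x => (P i).indicator (fun _ => (1:ℝ)) x * X i x) σ := by
          refine aux_integrable_of_bounded
            (((measurable_const.indicator (hPmeas i)).aemeasurable.mul
              (hXmeas i)).aestronglyMeasurable) (Cf := D) ?_
          intro x
          have h1 : (0:ℝ) ≤ (P i).indicator (fun _ => (1:ℝ)) x ∧
              (P i).indicator (fun _ => (1:ℝ)) x ≤ 1 := by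
            by_cases hx : x ∈ P i <;> simp [Set.indicator, hx]
          rw [abs_of_nonneg (mul_nonneg h1.1 (hXnn i x))]
          nlinarith [hXnn i x, hXbd i x, h1.1, h1.2]
        have hgiXInt : Integrable (fun x => gi i x * X i x) σ := by
          refine aux_integrable_of_bounded
            (((hgi_cont i).measurable.aemeasurable.mul (hXmeas i)).aestronglyMeasurable)
            (Cf := D) ?_
          intro x
          rw [abs_of_nonneg (mul_nonneg (hgi01 x).1 (hXnn i x))]
          nlinarith [hXnn i x, hXbd i x, (hgi01 x).1, (hgi01 x).2]
        have hAbsInt : ∀ (ν' : Measure (En n)), IsFiniteMeasure ν' → Integrable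
            (fun x => |gi i x - (P i).indicator (fun _ => (1:ℝ)) x|) ν' := by
          intro ν' hν'
          haveI := hν'
          refine aux_integrable_of_bounded
            (((hgi_cont i).measurable.sub
              (measurable_const.indicator (hPmeas i))).abs.aestronglyMeasurable) (Cf := 2) ?_
          intro x
          rw [abs_abs]
          have h1 : (0:ℝ) ≤ (P i).indicator (fun _ => (1:ℝ)) x ∧
              (P i).indicator (fun _ => (1:ℝ)) x ≤ 1 := by
            by_cases hx : x ∈ P i <;> simp [Set.indicator, hx]
          rw [abs_le]
          constructor <;> nlinarith [(hgi01 x).1, (hgi01 x).2, h1.1, h1.2]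
        -- step 0 : split off the ε part
        have hsplit : (∫ x, (P i).indicator (fun _ => (1:ℝ)) x * (X i x + ε) ∂σ)
            = (∫ x, (P i).indicator (fun _ => (1:ℝ)) x * X i x ∂σ) + ε * (σ (P i)).toReal := by
          have heq2 : (fun x => (P i).indicator (fun _ => (1:ℝ)) x * (X i x + ε))
              = fun x => (P i).indicator (fun _ => (1:ℝ)) x * X i x
                + ε * (P i).indicator (fun _ => (1:ℝ)) x := by
            funext x; ring
          have hεInd : Integrable (fun x => ε * (P i).indicator (fun _ => (1:ℝ)) x) σ :=
            aux_integrable_of_bounded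
              ((measurable_const.indicator (hPmeas i)).aestronglyMeasurable.const_mul ε)
              (Cf := ε) (fun x => by
                by_cases hx : x ∈ P i <;> simp [Set.indicator, hx, abs_of_nonneg hε.le, hε.le])
          rw [heq2, integral_add hIndInt hεInd, integral_const_mul,
            integral_indicator_const (1:ℝ) (hPmeas i)]
          simp [Measure.real]
        -- step 1 : replace the indicator by gi i
        have hstep1 : (∫ x, (P i).indicator (fun _ => (1:ℝ)) x * X i x ∂σ)
            ≤ (∫ x, gi i x * X i x ∂σ) + D * δ := by
          have hptw : ∀ x, (P i).indicator (fun _ => (1:ℝ)) x * X i x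
              ≤ gi i x * X i x + D * |gi i x - (P i).indicator (fun _ => (1:ℝ)) x| := by
            intro x
            have h0 := hXnn i x
            have hbd := hXbd i x
            have h1 := (hgi01 x).1
            have h2 := (hgi01 x).2
            by_cases hx : x ∈ P i
            · rw [Set.indicator_of_mem hx]
              have habs : 1 - gi i x ≤ |gi i x - 1| := by
                rw [abs_sub_comm]; exact le_abs_self _
              nlinarith [mul_le_mul_of_nonneg_right habs hD0,
                mul_le_mul_of_nonneg_left hbd (sub_nonneg.mpr h2)]
            · rw [Set.indicator_of_notMem hx]
              have habs : 0 ≤ |gi i x - 0| := abs_nonneg _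
              nlinarith [mul_nonneg h1 h0, abs_nonneg (gi i x - 0)]
          calc (∫ x, (P i).indicator (fun _ => (1:ℝ)) x * X i x ∂σ)
              ≤ ∫ x, (gi i x * X i x
                  + D * |gi i x - (P i).indicator (fun _ => (1:ℝ)) x|) ∂σ :=
                integral_mono hIndInt (hgiXInt.add ((hAbsInt σ hσfin).const_mul D)) hptw
            _ = (∫ x, gi i x * X i x ∂σ)
                + D * ∫ x, |gi i x - (P i).indicator (fun _ => (1:ℝ)) x| ∂σ := by
                rw [integral_add hgiXInt ((hAbsInt σ hσfin).const_mul D), integral_const_mul]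
            _ ≤ (∫ x, gi i x * X i x ∂σ) + D * δ := by
                have := hgi_σ i
                nlinarith [hD0]
        -- step 2 : the limit identity and the k-bound
        have hlim : (∫ x, gi i x * X i x ∂σ)
            ≤ ε * C * (((volume.restrict Ω) (P i)).toReal + δ) + D * C * δ := by
          have hgen_i := hgen (gi i) (hgi_cont i)
            ⟨fun r => dist r (e' i), continuous_id.dist continuous_const⟩ (χ j)
          simp only [ContinuousMap.coe_mk] at hgen_i
          rw [hσres] at hgen_i
          have hIndInt2 : Integrable ((P i).indicator (fun _ => (1:ℝ))) (volume.restrict Ω) :=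
            aux_integrable_of_bounded
              ((measurable_const.indicator (hPmeas i)).aestronglyMeasurable) (Cf := 1)
              (fun x => by by_cases hx : x ∈ P i <;> simp [Set.indicator, hx])
          have hIntgi : Integrable (fun x => gi i x) (volume.restrict Ω) :=
            aux_integrable_of_bounded (hgi_cont i).aestronglyMeasurable (Cf := 1)
              (fun x => abs_le.mpr ⟨by linarith [(hgi01 x).1], (hgi01 x).2⟩)
          have hgiP : (∫ x, gi i x ∂(volume.restrict Ω))
              ≤ ((volume.restrict Ω) (P i)).toReal + δ := by
            have hptw2 : ∀ x, gi i x ≤ (P i).indicator (fun _ => (1:ℝ)) x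
                + |gi i x - (P i).indicator (fun _ => (1:ℝ)) x| := by
              intro x
              have := le_abs_self (gi i x - (P i).indicator (fun _ => (1:ℝ)) x)
              linarith
            calc (∫ x, gi i x ∂(volume.restrict Ω))
                ≤ ∫ x, ((P i).indicator (fun _ => (1:ℝ)) x
                    + |gi i x - (P i).indicator (fun _ => (1:ℝ)) x|) ∂(volume.restrict Ω) :=
                  integral_mono hIntgi (hIndInt2.add (hAbsInt _ hfinvol)) hptw2
              _ = ((volume.restrict Ω) (P i)).toReal
                  + ∫ x, |gi i x - (P i).indicator (fun _ => (1:ℝ)) x| ∂(volume.restrict Ω) := by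
                  rw [integral_add hIndInt2 (hAbsInt _ hfinvol),
                    integral_indicator_const (1:ℝ) (hPmeas i)]
                  simp [Measure.real]
              _ ≤ ((volume.restrict Ω) (P i)).toReal + δ := by
                  have := hgi_vol i
                  linarith
          have hb : Tendsto (fun k : ℕ =>
              C * (∫ x in Ω, dist (ιU (u k x)) (ιU (u' x)) ∂volume)
              + (ε * C * (((volume.restrict Ω) (P i)).toReal + δ) + D * C * δ)) atTop
              (𝓝 (ε * C * (((volume.restrict Ω) (P i)).toReal + δ) + D * C * δ)) := by
            have h5 := (hJ.const_mul C).add (tendsto_const_nhds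
              (x := ε * C * (((volume.restrict Ω) (P i)).toReal + δ) + D * C * δ)
              (f := (atTop : Filter ℕ)))
            simpa using h5
          refine le_of_tendsto_of_tendsto' hgen_i hb ?_
          intro k
          have hptk : ∀ x : En n,
              gi i x * dist (ιU (u k x)) (e' i) * χ j (ιR (w k x)) * (1 + ‖w k x‖ ^ p)
              ≤ C * dist (ιU (u k x)) (ιU (u' x)) + ε * C * gi i x
                + D * C * |gi i x - (P i).indicator (fun _ => (1:ℝ)) x| := by
            intro x
            have hΘ0 : 0 ≤ χ j (ιR (w k x)) * (1 + ‖w k x‖ ^ p) :=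
              mul_nonneg (hχIcc j _).1
                (by nlinarith [Real.rpow_nonneg (norm_nonneg (w k x)) p])
            have hΘC : χ j (ιR (w k x)) * (1 + ‖w k x‖ ^ p) ≤ C := hχbd j (w k x)
            have hg0 := (hgi01 x).1
            have hg1 := (hgi01 x).2
            have hdtri : dist (ιU (u k x)) (e' i)
                ≤ dist (ιU (u k x)) (ιU (u' x)) + dist (a x) (e' i) :=
              dist_triangle (ιU (u k x)) (a x) (e' i)
            have hdk0 : (0:ℝ) ≤ dist (ιU (u k x)) (ιU (u' x)) := dist_nonneg
            have hd10 : (0:ℝ) ≤ dist (ιU (u k x)) (e' i) := dist_nonneg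
            have hform : gi i x * dist (ιU (u k x)) (e' i) * χ j (ιR (w k x)) * (1 + ‖w k x‖ ^ p)
                = (gi i x * dist (ιU (u k x)) (e' i))
                  * (χ j (ιR (w k x)) * (1 + ‖w k x‖ ^ p)) := by ring
            rw [hform]
            by_cases hx : x ∈ T i
            · have hd2 : dist (a x) (e' i) < ε := hx
              have hd20 : (0:ℝ) ≤ dist (a x) (e' i) := dist_nonneg
              have hstep : gi i x * dist (ιU (u k x)) (e' i)
                  ≤ dist (ιU (u k x)) (ιU (u' x)) + ε * gi i x := by
                nlinarith [mul_le_mul_of_nonneg_left hdtri hg0,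
                  mul_nonneg (sub_nonneg.mpr hg1) hdk0,
                  mul_le_mul_of_nonneg_left hd2.le hg0]
              have hnn : (0:ℝ) ≤ dist (ιU (u k x)) (ιU (u' x)) + ε * gi i x := by nlinarith
              have hmm := mul_le_mul hstep hΘC hΘ0 hnn
              have habs : (0:ℝ) ≤ |gi i x - (P i).indicator (fun _ => (1:ℝ)) x| := abs_nonneg _
              have hexp : (dist (ιU (u k x)) (ιU (u' x)) + ε * gi i x) * C
                  = C * dist (ιU (u k x)) (ιU (u' x)) + ε * C * gi i x := by ring
              have hDC : (0:ℝ) ≤ D * C := mul_nonneg hD0 (by linarith)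
              nlinarith [mul_nonneg hDC habs]
            · have hxP : x ∉ P i := fun hxPi => hx ((show ind x = i from hxPi) ▸ hindT x)
              have habs : |gi i x - (P i).indicator (fun _ => (1:ℝ)) x| = gi i x := by
                rw [Set.indicator_of_notMem hxP, sub_zero, abs_of_nonneg hg0]
              have hd2D : dist (a x) (e' i) ≤ D := hD _ _
              have hd20 : (0:ℝ) ≤ dist (a x) (e' i) := dist_nonneg
              have hstep : gi i x * dist (ιU (u k x)) (e' i)
                  ≤ dist (ιU (u k x)) (ιU (u' x)) + D * gi i x := by
                nlinarith [mul_le_mul_of_nonneg_left hdtri hg0,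
                  mul_nonneg (sub_nonneg.mpr hg1) hdk0,
                  mul_le_mul_of_nonneg_left hd2D hg0]
              have hnn : (0:ℝ) ≤ dist (ιU (u k x)) (ιU (u' x)) + D * gi i x := by nlinarith
              have hmm := mul_le_mul hstep hΘC hΘ0 hnn
              rw [habs]
              have hexp : (dist (ιU (u k x)) (ιU (u' x)) + D * gi i x) * C
                  = C * dist (ιU (u k x)) (ιU (u' x)) + D * C * gi i x := by ring
              nlinarith [mul_nonneg (mul_nonneg hε.le (show (0:ℝ) ≤ C by linarith)) hg0]
          have hdistAESM : AEStronglyMeasurable (fun x => dist (ιU (u k x)) (e' i))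
              (volume.restrict Ω) :=
            ((continuous_id.dist continuous_const).comp
              hιU.continuous).comp_aestronglyMeasurable (hu k).aestronglyMeasurable
          have hχAESM : AEStronglyMeasurable (fun x => χ j (ιR (w k x))) (volume.restrict Ω) :=
            ((χ j).continuous.comp hιR.continuous).comp_aestronglyMeasurable
              (hw k).aestronglyMeasurable
          have hIntdk : Integrable (fun x => dist (ιU (u k x)) (ιU (u' x)))
              (volume.restrict Ω) := by
            refine aux_integrable_of_bounded ?_ (Cf := D) ?_
            · exact (hιU.continuous.comp_aestronglyMeasurable
                (hu k).aestronglyMeasurable).dist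
                (hιU.continuous.comp_aestronglyMeasurable hu'meas.aestronglyMeasurable)
            · intro x
              rw [abs_of_nonneg dist_nonneg]
              exact hD _ _
          have hIntL : Integrable (fun x =>
              gi i x * dist (ιU (u k x)) (e' i) * χ j (ιR (w k x)) * (1 + ‖w k x‖ ^ p))
              (volume.restrict Ω) := by
            refine (hwint k).bdd_mul (c := D)
              (((hgi_cont i).aestronglyMeasurable.mul hdistAESM).mul hχAESM) ?_
            refine Eventually.of_forall fun x => ?_
            rw [Real.norm_eq_abs, abs_of_nonneg (mul_nonneg
              (mul_nonneg (hgi01 x).1 dist_nonneg) (hχIcc j _).1)]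
            have hh1 : gi i x * dist (ιU (u k x)) (e' i) ≤ dist (ιU (u k x)) (e' i) := by
              nlinarith [(hgi01 x).1, (hgi01 x).2,
                dist_nonneg (x := ιU (u k x)) (y := e' i)]
            have hh2 : gi i x * dist (ιU (u k x)) (e' i) * χ j (ιR (w k x))
                ≤ dist (ιU (u k x)) (e' i) := by
              nlinarith [(hχIcc j (ιR (w k x))).1, (hχIcc j (ιR (w k x))).2,
                mul_nonneg (hgi01 x).1 (dist_nonneg (x := ιU (u k x)) (y := e' i))]
            linarith [hD (ιU (u k x)) (e' i)]
          have hIntR : Integrable (fun x =>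
              C * dist (ιU (u k x)) (ιU (u' x)) + ε * C * gi i x
              + D * C * |gi i x - (P i).indicator (fun _ => (1:ℝ)) x|)
              (volume.restrict Ω) :=
            ((hIntdk.const_mul C).add (hIntgi.const_mul (ε * C))).add
              ((hAbsInt _ hfinvol).const_mul (D * C))
          calc (∫ x in Ω,
                gi i x * dist (ιU (u k x)) (e' i) * χ j (ιR (w k x)) * (1 + ‖w k x‖ ^ p))
              ≤ ∫ x in Ω, (C * dist (ιU (u k x)) (ιU (u' x)) + ε * C * gi i x
                  + D * C * |gi i x - (P i).indicator (fun _ => (1:ℝ)) x|) ∂volume :=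
                integral_mono hIntL hIntR hptk
            _ = C * (∫ x in Ω, dist (ιU (u k x)) (ιU (u' x)) ∂volume)
                + ε * C * (∫ x, gi i x ∂(volume.restrict Ω))
                + D * C * (∫ x, |gi i x - (P i).indicator (fun _ => (1:ℝ)) x|
                    ∂(volume.restrict Ω)) := by
                have h12 : Integrable (fun x =>
                    C * dist (ιU (u k x)) (ιU (u' x)) + ε * C * gi i x)
                    (volume.restrict Ω) :=
                  (hIntdk.const_mul C).add (hIntgi.const_mul (ε * C))
                rw [integral_add h12 ((hAbsInt _ hfinvol).const_mul (D * C)),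
                  integral_add (hIntdk.const_mul C) (hIntgi.const_mul (ε * C)),
                  integral_const_mul, integral_const_mul, integral_const_mul]
            _ ≤ C * (∫ x in Ω, dist (ιU (u k x)) (ιU (u' x)) ∂volume)
                + (ε * C * (((volume.restrict Ω) (P i)).toReal + δ) + D * C * δ) := by
                have m1 : ε * C * (∫ x, gi i x ∂(volume.restrict Ω))
                    ≤ ε * C * (((volume.restrict Ω) (P i)).toReal + δ) :=
                  mul_le_mul_of_nonneg_left hgiP (by nlinarith)
                have m2 : D * C * (∫ x, |gi i x - (P i).indicator (fun _ => (1:ℝ)) x|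
                    ∂(volume.restrict Ω)) ≤ D * C * δ :=
                  mul_le_mul_of_nonneg_left (hgi_vol i) (by nlinarith)
                linarith
        calc (∫ x, (P i).indicator (fun _ => (1:ℝ)) x * (X i x + ε) ∂σ)
            = (∫ x, (P i).indicator (fun _ => (1:ℝ)) x * X i x ∂σ) + ε * (σ (P i)).toReal :=
              hsplit
          _ ≤ ((∫ x, gi i x * X i x ∂σ) + D * δ) + ε * (σ (P i)).toReal := by linarith
          _ ≤ (ε * C * (((volume.restrict Ω) (P i)).toReal + δ) + D * C * δ + D * δ)
              + ε * (σ (P i)).toReal := by linarith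
          _ ≤ ε * C * ((volume.restrict Ω) (P i)).toReal + ε * (σ (P i)).toReal
              + δ * (C + D * C + D) := by
              have hC0 : (0:ℝ) ≤ C := by linarith
              nlinarith [mul_le_mul_of_nonneg_right hε1 (mul_nonneg hC0 hδpos.le),
                mul_nonneg hD0 hδpos.le]
      -- summing up
      have hsum1 : ∑ i ∈ Finset.range N, ((volume.restrict Ω) (P i)).toReal
          ≤ (volume Ω).toReal := by
        rw [← ENNReal.toReal_sum (fun i _ => measure_ne_top _ _)]
        refine ENNReal.toReal_mono hΩvol.ne ?_
        rw [← measure_biUnion_finset ?_ (fun i _ => hPmeas i)]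
        · calc (volume.restrict Ω) (⋃ i ∈ Finset.range N, P i)
              ≤ (volume.restrict Ω) univ := measure_mono (Set.subset_univ _)
            _ = volume Ω := Measure.restrict_apply_univ _
        · intro i₁ h₁ i₂ h₂ hne
          exact Set.disjoint_left.mpr fun x hx₁ hx₂ => hne (by
            rw [← (show ind x = i₁ from hx₁), (show ind x = i₂ from hx₂)])
      have hsum2 : ∑ i ∈ Finset.range N, (σ (P i)).toReal ≤ (σ univ).toReal := by
        rw [← ENNReal.toReal_sum (fun i _ => measure_ne_top _ _)]
        refine ENNReal.toReal_mono (measure_ne_top _ _) ?_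
        rw [← measure_biUnion_finset ?_ (fun i _ => hPmeas i)]
        · exact measure_mono (Set.subset_univ _)
        · intro i₁ h₁ i₂ h₂ hne
          exact Set.disjoint_left.mpr fun x hx₁ hx₂ => hne (by
            rw [← (show ind x = i₁ from hx₁), (show ind x = i₂ from hx₂)])
      have hNδ : (N:ℝ) * (δ * (C + D * C + D)) ≤ ε := by
        have hZ1 : ((N:ℝ) + 1) ≠ 0 := by positivity
        have hZ2 : C + D * C + D + 1 ≠ 0 := ne_of_gt hCD
        have h2 : ((N:ℝ) + 1) * (δ * (C + D * C + D + 1)) = ε := by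
          rw [hδdef]
          field_simp
        have hN0 : (0:ℝ) ≤ N := Nat.cast_nonneg N
        nlinarith [hδpos.le]
      calc (∫ x, E x ∂σ)
          ≤ ∑ i ∈ Finset.range N, (ε * C * ((volume.restrict Ω) (P i)).toReal
              + ε * (σ (P i)).toReal + δ * (C + D * C + D)) :=
            le_trans hIle (Finset.sum_le_sum fun i _ => hterm i)
        _ = ε * C * (∑ i ∈ Finset.range N, ((volume.restrict Ω) (P i)).toReal)
            + ε * (∑ i ∈ Finset.range N, (σ (P i)).toReal)
            + (N:ℝ) * (δ * (C + D * C + D)) := by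
            rw [Finset.sum_add_distrib, Finset.sum_add_distrib, ← Finset.mul_sum,
              ← Finset.mul_sum, Finset.sum_const, Finset.card_range, nsmul_eq_mul]
        _ ≤ ε * C * (volume Ω).toReal + ε * (σ univ).toReal + ε := by
            have m1 : ε * C * (∑ i ∈ Finset.range N, ((volume.restrict Ω) (P i)).toReal)
                ≤ ε * C * (volume Ω).toReal :=
              mul_le_mul_of_nonneg_left hsum1 (by nlinarith)
            have m2 : ε * (∑ i ∈ Finset.range N, (σ (P i)).toReal) ≤ ε * (σ univ).toReal :=
              mul_le_mul_of_nonneg_left hsum2 hε.le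
            linarith
        _ = ε * (C * (volume Ω).toReal + (σ univ).toReal + 1) := by ring
    -- conclusion from the ε-estimate
    have hI0 : (∫ x, E x ∂σ) ≤ 0 := by
      by_contra hI
      push_neg at hI
      set KK : ℝ := C * (volume Ω).toReal + (σ univ).toReal + 1 with hKK
      have hKK1 : 1 ≤ KK := by
        have h1 : 0 ≤ C * (volume Ω).toReal :=
          mul_nonneg (by linarith) ENNReal.toReal_nonneg
        have h2 : (0:ℝ) ≤ (σ univ).toReal := ENNReal.toReal_nonneg
        rw [hKK]; linarith
      set I : ℝ := ∫ x, E x ∂σ with hIdef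
      set ε0 : ℝ := min 1 (I / (2 * KK)) with hε0
      have hε0pos : 0 < ε0 := lt_min one_pos (div_pos hI (by linarith))
      have h1 := hest ε0 hε0pos (min_le_left _ _)
      have h2 : ε0 * KK ≤ (I / (2 * KK)) * KK :=
        mul_le_mul_of_nonneg_right (min_le_right _ _) (by linarith)
      have h3 : (I / (2 * KK)) * KK = I / 2 := by
        field_simp
      rw [h3] at h2
      have h1' : I ≤ ε0 * KK := by rw [hKK]; exact h1
      have hIpos : (0:ℝ) < I := hI
      clear_value I KK ε0
      linarith
    have hInn : 0 ≤ ∫ x, E x ∂σ := integral_nonneg hEnn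
    have hIzero : (∫ x, E x ∂σ) = 0 := le_antisymm hI0 hInn
    have hfinal := (integral_eq_zero_iff_of_nonneg_ae
      (Eventually.of_forall hEnn) hEint).1 hIzero
    filter_upwards [hfinal] with x hx using hx
  -- putting everything together
  have hmain' : ∀ᵐ x ∂(volume.restrict Ω),
      ∀ j : ℕ, (∫ t, χ j t * G (x, t) ∂(νh x)) = 0 :=
    ae_all_iff.2 fun j => haetrans _ (main j)
  filter_upwards [hmain', hu'ae] with x hx hxe
  have hGx : ∀ j : ℕ, ∀ᵐ t ∂(νh x), χ j t * G (x, t) = 0 := by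
    intro j
    haveI := hνhprob x
    have hint : Integrable (fun t => χ j t * G (x, t)) (νh x) :=
      aux_integrable_of_bounded
        (((χ j).continuous.measurable.mul
          (hGmeas.comp measurable_prodMk_left)).aestronglyMeasurable)
        (Cf := D) (fun t => by
          rw [abs_of_nonneg (mul_nonneg (hχIcc j t).1 (hGnn _))]
          calc χ j t * G (x, t) ≤ 1 * D :=
                mul_le_mul (hχIcc j t).2 (hGbd _) (hGnn _) zero_le_one
            _ = D := one_mul D)
    have h0 := (integral_eq_zero_iff_of_nonneg_ae
      (Eventually.of_forall fun t => mul_nonneg (hχIcc j t).1 (hGnn _)) hint).1 (hx j)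
    filter_upwards [h0] with t ht using ht
  have hGx' : ∀ᵐ t ∂(νh x), ∀ j : ℕ, χ j t * G (x, t) = 0 := ae_all_iff.2 hGx
  filter_upwards [hGx'] with t ht hmem
  obtain ⟨z, rfl⟩ := hmem
  have hj := ht ⌈‖z‖⌉₊
  rw [hχone ⌈‖z‖⌉₊ z (Nat.le_ceil _), one_mul] at hj
  -- hj : G (x, ιR z) = 0
  have hax : a x = ιU (ulim x) := by rw [hadef]; exact congrArg ιU hxe.symm
  rw [← hax]
  have hae0 : (fun r => dist r (a x)) =ᵐ[μh (ιR z) x] 0 := by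
    have := (integral_eq_zero_iff_of_nonneg_ae
      (Eventually.of_forall fun r => dist_nonneg) (hdint (a x) (ιR z) x)).1 hj
    exact this
  have hsingle : μh (ιR z) x {a x}ᶜ = 0 := by
    have h1 : {r : βU | ¬ (fun r => dist r (a x)) r = (0 : βU → ℝ) r} = {a x}ᶜ := by
      ext r; simp [dist_eq_zero]
    have := hae0
    rw [EventuallyEq, ae_iff] at this
    rwa [h1] at this
  haveI := hμhprob (ιR z) x
  refine Measure.ext fun S hS => ?_
  rw [Measure.dirac_apply' _ hS]
  by_cases hb : a x ∈ S
  · have hsub : Sᶜ ⊆ {a x}ᶜ := fun r hr => fun hra => hr (hra ▸ hb)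
    have hc0 : μh (ιR z) x Sᶜ = 0 := le_antisymm
      (le_trans (measure_mono hsub) (le_of_eq hsingle)) (by positivity)
    have := measure_add_measure_compl (μ := μh (ιR z) x) hS
    rw [hc0, add_zero, measure_univ] at this
    rw [this, Set.indicator_of_mem hb]
    rfl
  · have hsub : S ⊆ {a x}ᶜ := fun r hr => fun hra => hb (hra ▸ hr)
    have : μh (ιR z) x S = 0 := le_antisymm
      (le_trans (measure_mono hsub) (le_of_eq hsingle)) (by positivity)
    rw [this, Set.indicator_of_notMem hb]
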